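/- Let H be a τ-subgraph-plus (a τ-subgraph possibly together with isolated variable-vertices, each isolated vertex contributing 2 credits to revenue) with at most SMALL constraints and R(H) ≤ r. Let H' be a τ-subgraph with at most SMALL constraints having at most s leaf variable-vertices not in H. Assume r + s ≤ ζ·SMALL and the Plausibility Assumption holds. Then H ∪ H' has at most SMALL constraints and R(H ∪ H') ≤ r + s. -/

import Mathlib

open scoped Classical
open Finset

namespace CSP

variable {Cn Vr : Type*} [Fintype Cn] [Fintype Vr] [DecidableEq Cn] [DecidableEq Vr]

/-- Constraint-vertices of an edge-induced subgraph (given as a set of edges). -/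
def consOf (H : Finset (Cn × Vr)) : Finset Cn := H.image Prod.fst

/-- Variable-vertices of an edge-induced subgraph. -/
def vbls (H : Finset (Cn × Vr)) : Finset Vr := H.image Prod.snd

/-- Degree of a constraint-vertex within `H`. -/
def degC (H : Finset (Cn × Vr)) (f : Cn) : ℕ := (H.filter fun e => e.1 = f).card

/-- Degree of a variable-vertex within `H`. -/
def degV (H : Finset (Cn × Vr)) (v : Vr) : ℕ := (H.filter fun e => e.2 = v).card

/-- Leaf variable-vertices: those of degree exactly 1. -/
def leaves (H : Finset (Cn × Vr)) : Finset Vr := (vbls H).filter fun v => degV H v = 1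

/-- Revenue: one credit per leaf variable-vertex, minus a debit for each excess edge
(edges beyond 2 at a variable-vertex, beyond `τ` at a constraint-vertex). -/
def revenue (τ : ℕ) (H : Finset (Cn × Vr)) : ℝ :=
  ((leaves H).card : ℝ)
    - (((∑ v ∈ vbls H, (degV H v - 2)) + ∑ f ∈ consOf H, (degC H f - τ) : ℕ) : ℝ)

/-- A `τ`-subgraph: every constraint-vertex has degree at least `τ`. -/
def IsTau (τ : ℕ) (H : Finset (Cn × Vr)) : Prop := ∀ f ∈ consOf H, τ ≤ degC H f

/-- Plausibility: income `R(H) - ζ·|consOf H|` is nonnegative. -/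
def Plausible (τ : ℕ) (ζ : ℝ) (H : Finset (Cn × Vr)) : Prop :=
  ζ * ((consOf H).card : ℝ) ≤ revenue τ H

/-- The Plausibility Assumption for a factor graph with edge set `E`. -/
def PlausibilityAssumption (τ : ℕ) (ζ : ℝ) (SMALL : ℕ) (E : Finset (Cn × Vr)) : Prop :=
  ∀ H ⊆ E, IsTau τ H → (consOf H).card ≤ 2 * SMALL → Plausible τ ζ H

/-- `S`-closed: a `τ`-subgraph all of whose leaf variable-vertices lie in `S`. -/
def SClosed (τ : ℕ) (S : Finset Vr) (H : Finset (Cn × Vr)) : Prop :=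
  IsTau τ H ∧ leaves H ⊆ S

/-- The closure of `S`: the union of all small `S`-closed `τ`-subgraphs of `E`. -/
noncomputable def closure (τ SMALL : ℕ) (E : Finset (Cn × Vr)) (S : Finset Vr) :
    Finset (Cn × Vr) :=
  (E.powerset.filter fun H => SClosed τ S H ∧ (consOf H).card ≤ SMALL).sup id

end CSP

open CSP

/-- Revenue of a τ-subgraph-plus: the τ-subgraph `H` together with a set `W` of isolated
variable-vertices, each isolated vertex contributing 2 credits. -/
noncomputable def revenuePlus {Cn Vr : Type*} [Fintype Cn] [Fintype Vr]
    [DecidableEq Cn] [DecidableEq Vr] (τ : ℕ) (H : Finset (Cn × Vr)) (W : Finset Vr) : ℝ :=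
  revenue τ H + 2 * (W.card : ℝ)

/-
Passing from `H` to `H ∪ H'` never removes a debit, since degrees only grow. A leaf of
`H ∪ H'` is a leaf of `H`, a formerly isolated vertex of `W` (which had paid 2 credits and
now pays at most 1), or a leaf of `H'` outside `H ∪ W`; so the revenue grows by at most `s`.
The union is a `τ`-subgraph with at most `2·SMALL` constraints, so the Plausibility Assumption
gives `ζ·|consOf (H ∪ H')| ≤ R(H ∪ H') ≤ r + s ≤ ζ·SMALL`.
-/

namespace CSP

variable {Cn Vr : Type*}

lemma mem_vbls_iff_degV_pos [DecidableEq Vr] {H : Finset (Cn × Vr)} {v : Vr} :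
    v ∈ vbls H ↔ 0 < degV H v := by
  simp [vbls, degV, Finset.card_pos, Finset.filter_nonempty_iff]

lemma degV_mono [DecidableEq Vr] {H H' : Finset (Cn × Vr)} (h : H ⊆ H') (v : Vr) :
    degV H v ≤ degV H' v :=
  card_le_card (filter_subset_filter _ h)

lemma degC_mono [DecidableEq Cn] {H H' : Finset (Cn × Vr)} (h : H ⊆ H') (f : Cn) :
    degC H f ≤ degC H' f :=
  card_le_card (filter_subset_filter _ h)

variable [DecidableEq Cn] [DecidableEq Vr]

def debit (τ : ℕ) (H : Finset (Cn × Vr)) : ℕ :=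
  (∑ v ∈ vbls H, (degV H v - 2)) + ∑ f ∈ consOf H, (degC H f - τ)

lemma revenue_eq (τ : ℕ) (H : Finset (Cn × Vr)) :
    revenue τ H = (leaves H).card - debit τ H := rfl

lemma degV_union_le (H H' : Finset (Cn × Vr)) (v : Vr) :
    degV (H ∪ H') v ≤ degV H v + degV H' v := by
  unfold degV
  rw [filter_union]
  exact card_union_le _ _

lemma consOf_union (H H' : Finset (Cn × Vr)) : consOf (H ∪ H') = consOf H ∪ consOf H' :=
  image_union _ _

lemma debit_mono (τ : ℕ) {H U : Finset (Cn × Vr)} (h : H ⊆ U) : debit τ H ≤ debit τ U := by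
  unfold debit
  gcongr
  · exact (sum_le_sum fun v _ => Nat.sub_le_sub_right (degV_mono h v) 2).trans
      (sum_le_sum_of_subset (image_subset_image h))
  · exact (sum_le_sum fun f _ => Nat.sub_le_sub_right (degC_mono h f) τ).trans
      (sum_le_sum_of_subset (image_subset_image h))

lemma IsTau.union {τ : ℕ} {H H' : Finset (Cn × Vr)} (hH : IsTau τ H) (hH' : IsTau τ H') :
    IsTau τ (H ∪ H') := by
  intro f hf
  rcases mem_union.1 (consOf_union H H' ▸ hf) with hf | hf
  · exact (hH f hf).trans (degC_mono subset_union_left f)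
  · exact (hH' f hf).trans (degC_mono subset_union_right f)

lemma leaves_union_subset (H H' : Finset (Cn × Vr)) (W : Finset Vr) :
    leaves (H ∪ H') ⊆ leaves H ∪ (W ∩ vbls (H ∪ H')) ∪ (leaves H' \ (vbls H ∪ W)) := by
  intro v hv
  obtain ⟨hvU, hdU⟩ := mem_filter.1 hv
  have hle : degV H v ≤ 1 := hdU ▸ degV_mono subset_union_left v
  have hle' : degV H' v ≤ 1 := hdU ▸ degV_mono subset_union_right v
  by_cases hH : v ∈ vbls H
  · have hpos := mem_vbls_iff_degV_pos.1 hH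
    exact mem_union_left _ (mem_union_left _ (mem_filter.2 ⟨hH, by omega⟩))
  by_cases hWv : v ∈ W
  · exact mem_union_left _ (mem_union_right _ (mem_inter.2 ⟨hWv, hvU⟩))
  have hH0 : degV H v = 0 := by
    by_contra h
    exact hH (mem_vbls_iff_degV_pos.2 (Nat.pos_of_ne_zero h))
  have hpos' : 0 < degV H' v := by
    have := degV_union_le H H' v
    omega
  refine mem_union_right _ (mem_sdiff.2 ⟨?_, by simp [hH, hWv]⟩)
  exact mem_filter.2 ⟨mem_vbls_iff_degV_pos.2 hpos', by omega⟩

lemma card_leaves_union_le (H H' : Finset (Cn × Vr)) (W : Finset Vr) :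
    (leaves (H ∪ H')).card ≤
      (leaves H).card + (W ∩ vbls (H ∪ H')).card + (leaves H' \ (vbls H ∪ W)).card :=
  calc (leaves (H ∪ H')).card
      ≤ (leaves H ∪ (W ∩ vbls (H ∪ H')) ∪ (leaves H' \ (vbls H ∪ W))).card :=
        card_le_card (leaves_union_subset H H' W)
    _ ≤ _ := (card_union_le _ _).trans (Nat.add_le_add_right (card_union_le _ _) _)

lemma revenuePlus_union_le [Fintype Cn] [Fintype Vr] (τ : ℕ) (H H' : Finset (Cn × Vr))
    (W : Finset Vr) :
    revenuePlus τ (H ∪ H') (W \ vbls (H ∪ H')) ≤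
      revenuePlus τ H W + (leaves H' \ (vbls H ∪ W)).card := by
  have hleaves : ((leaves (H ∪ H')).card : ℝ) ≤ (leaves H).card + (W ∩ vbls (H ∪ H')).card
      + (leaves H' \ (vbls H ∪ W)).card := by
    exact_mod_cast card_leaves_union_le H H' W
  have hdebit : (debit τ H : ℝ) ≤ debit τ (H ∪ H') := by
    exact_mod_cast debit_mono τ subset_union_left
  have hW : ((W \ vbls (H ∪ H')).card : ℝ) + (W ∩ vbls (H ∪ H')).card = W.card := by
    exact_mod_cast card_sdiff_add_card_inter W (vbls (H ∪ H'))
  simp only [revenuePlus, revenue_eq]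
  linarith

lemma revenue_le_revenuePlus [Fintype Cn] [Fintype Vr] (τ : ℕ) (H : Finset (Cn × Vr))
    (W : Finset Vr) :
    revenue τ H ≤ revenuePlus τ H W :=
  le_add_of_nonneg_right (by positivity)

lemma Plausible.card_consOf_le {τ : ℕ} {ζ : ℝ} {H : Finset (Cn × Vr)} (hH : Plausible τ ζ H)
    (hζ : 0 < ζ) {n : ℕ} (hrev : revenue τ H ≤ ζ * n) : (consOf H).card ≤ n := by
  exact_mod_cast le_of_mul_le_mul_left (hH.trans hrev) hζ

end CSP

theorem stmt_7_general {Cn Vr : Type*} [Fintype Cn] [Fintype Vr] [DecidableEq Cn] [DecidableEq Vr]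
    (τ SMALL : ℕ)
    (ζ : ℝ) (hζ0 : 0 < ζ)
    (E : Finset (Cn × Vr)) (hPA : PlausibilityAssumption τ ζ SMALL E)
    (r : ℝ) (s : ℕ)
    (H : Finset (Cn × Vr)) (W : Finset Vr)
    (hHE : H ⊆ E) (hHtau : IsTau τ H)
    (hHsmall : (consOf H).card ≤ SMALL) (hHrev : revenuePlus τ H W ≤ r)
    (H' : Finset (Cn × Vr)) (hH'E : H' ⊆ E) (hH'tau : IsTau τ H')
    (hH'small : (consOf H').card ≤ SMALL)
    (hleaves : ((leaves H') \ (vbls H ∪ W)).card ≤ s)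
    (hrs : r + (s : ℝ) ≤ ζ * SMALL) :
    (consOf (H ∪ H')).card ≤ SMALL ∧
      revenuePlus τ (H ∪ H') (W \ vbls (H ∪ H')) ≤ r + s := by
  have hrev : revenuePlus τ (H ∪ H') (W \ vbls (H ∪ H')) ≤ r + s := by
    have : ((leaves H' \ (vbls H ∪ W)).card : ℝ) ≤ s := by exact_mod_cast hleaves
    linarith [revenuePlus_union_le τ H H' W]
  have hcons : (consOf (H ∪ H')).card ≤ 2 * SMALL := by
    rw [consOf_union]
    have := card_union_le (consOf H) (consOf H')
    omega
  have hplaus := hPA _ (union_subset hHE hH'E) (hHtau.union hH'tau) hcons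
  exact ⟨hplaus.card_consOf_le hζ0 <| (revenue_le_revenuePlus τ _ _).trans (hrev.trans hrs),
    hrev⟩

/-- Union-revenue lemma: if `(H, W)` is a small τ-subgraph-plus with revenue ≤ r, and `H'`
is a small τ-subgraph with at most `s` leaves outside `H ∪ W`, with `r + s ≤ ζ·SMALL` and
the Plausibility Assumption, then the union is small and has revenue ≤ r + s. -/
theorem stmt_7 {Cn Vr : Type*} [Fintype Cn] [Fintype Vr] [DecidableEq Cn] [DecidableEq Vr]
    (τ SMALL : ℕ) (hτ : 3 ≤ τ) (hSMALL : 1 ≤ SMALL)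
    (ζ : ℝ) (hζ0 : 0 < ζ) (hζ1 : ζ < 1)
    (E : Finset (Cn × Vr)) (hPA : PlausibilityAssumption τ ζ SMALL E)
    (r : ℝ) (s : ℕ)
    (H : Finset (Cn × Vr)) (W : Finset Vr)
    (hHE : H ⊆ E) (hHtau : IsTau τ H) (hW : Disjoint W (vbls H))
    (hHsmall : (consOf H).card ≤ SMALL) (hHrev : revenuePlus τ H W ≤ r)
    (H' : Finset (Cn × Vr)) (hH'E : H' ⊆ E) (hH'tau : IsTau τ H')
    (hH'small : (consOf H').card ≤ SMALL)
    (hleaves : ((leaves H') \ (vbls H ∪ W)).card ≤ s)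
    (hrs : r + (s : ℝ) ≤ ζ * SMALL) :
    (consOf (H ∪ H')).card ≤ SMALL ∧
      revenuePlus τ (H ∪ H') (W \ vbls (H ∪ H')) ≤ r + s :=
  stmt_7_general τ SMALL ζ hζ0 E hPA r s H W hHE hHtau hHsmall hHrev H' hH'E hH'tau hH'small hleaves
    hrs
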